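/- Let G be a finite abstract simplicial complex. Then Σ_{x∈G} w(x)·χ(S(x)) = 0; that is, the sum of the Euler characteristics of the unit spheres centered at even-dimensional simplices equals the sum of the Euler characteristics of the unit spheres centered at odd-dimensional simplices. -/
import Mathlib


open Finset Polynomial

namespace SphereFormula

variable {V : Type} [DecidableEq V]

/-- A finite abstract simplicial complex: a finite collection of nonempty finite sets
that is closed under taking nonempty subsets. -/
def IsComplex (G : Finset (Finset V)) : Prop :=
  ∀ x ∈ G, x.Nonempty ∧ ∀ y, y ⊆ x → y.Nonempty → y ∈ G

/-- `w x = (-1)^(dim x)` where `dim x = |x| - 1`. -/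
def w (x : Finset V) : ℤ := (-1) ^ (x.card - 1)

/-- Euler characteristic of a finite set of simplices: `χ(A) = Σ_{x ∈ A} w x`. -/
def chi (A : Finset (Finset V)) : ℤ := ∑ x ∈ A, w x

/-- The star `U(x) = {y ∈ G : x ⊆ y}`. -/
def star (G : Finset (Finset V)) (x : Finset V) : Finset (Finset V) :=
  G.filter fun y => x ⊆ y

/-- The unit ball `B(x) = {z ∈ G : z ⊆ y for some y ∈ U(x)}` (closure of the star). -/
def ball (G : Finset (Finset V)) (x : Finset V) : Finset (Finset V) :=
  G.filter fun z => ∃ y ∈ G, x ⊆ y ∧ z ⊆ y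

/-- The unit sphere `S(x) = B(x) \ U(x)`. -/
def sphere (G : Finset (Finset V)) (x : Finset V) : Finset (Finset V) :=
  ball G x \ star G x

/-- The vertex set of `G`: those `v` with `{v} ∈ G`. -/
def verts (G : Finset (Finset V)) : Finset V :=
  (G.biUnion id).filter fun v => {v} ∈ G

/-- Contractibility, defined inductively: a single vertex complex is contractible, and `G`
is contractible if there is `x ∈ G` with both `S(x)` and `G \ U(x)` contractible. -/
inductive Contractible : Finset (Finset V) → Prop where
  | point (v : V) : Contractible ({({v} : Finset V)} : Finset (Finset V))
  | step (G : Finset (Finset V)) (x : Finset V) (hx : x ∈ G)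
      (hS : Contractible (sphere G x)) (hG : Contractible (G \ star G x)) :
      Contractible G

mutual
  /-- `G` is a `d`-manifold (`d ≥ 0`): every unit sphere `S(x)` is a `(d-1)`-sphere. -/
  inductive IsManifold : ℤ → Finset (Finset V) → Prop where
    | mk (d : ℤ) (G : Finset (Finset V)) (hd : 0 ≤ d)
        (h : ∀ x ∈ G, IsSphere (d - 1) (sphere G x)) : IsManifold d G

  /-- `d`-spheres: the empty complex is the `(-1)`-sphere, and a `d`-sphere is a
  `d`-manifold `G` such that `G \ U(x)` is contractible for some `x ∈ G`. -/
  inductive IsSphere : ℤ → Finset (Finset V) → Prop where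
    | empty : IsSphere (-1) (∅ : Finset (Finset V))
    | mk (d : ℤ) (G : Finset (Finset V)) (hm : IsManifold d G)
        (h : ∃ x ∈ G, Contractible (G \ star G x)) : IsSphere d G
end

/-- The f-function `f_G(t) = 1 + Σ_{k ≥ 0} f_k(G) t^(k+1) = 1 + Σ_{x ∈ G} t^|x|`. -/
noncomputable def fPoly (G : Finset (Finset V)) : Polynomial ℚ :=
  1 + ∑ x ∈ G, Polynomial.X ^ x.card

/-- `F_H(t) = ∫_0^t f_H(s) ds = t + Σ_{k ≥ 0} f_k(H) t^(k+2)/(k+2)`. -/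
noncomputable def FPoly (H : Finset (Finset V)) : Polynomial ℚ :=
  Polynomial.X +
    ∑ x ∈ H, Polynomial.C (((x.card : ℚ) + 1)⁻¹) * Polynomial.X ^ (x.card + 1)

/-- The join `G + H = G ∪ H ∪ {x ∪ y : x ∈ G, y ∈ H}`. -/
def joinC (G H : Finset (Finset V)) : Finset (Finset V) :=
  G ∪ H ∪ (G ×ˢ H).image fun p => p.1 ∪ p.2

/-- The barycentric refinement: simplices are the nonempty chains in `(G, ⊆)`. -/
def bary (G : Finset (Finset V)) : Finset (Finset (Finset V)) :=
  G.powerset.filter fun c => c.Nonempty ∧ ∀ x ∈ c, ∀ y ∈ c, x ⊆ y ∨ y ⊆ x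

/-- `f` is locally injective: distinct vertices of a common simplex have distinct values. -/
def LocallyInjective (G : Finset (Finset V)) (f : V → ℤ) : Prop :=
  ∀ x ∈ G, ∀ v ∈ x, ∀ u ∈ x, v ≠ u → f v ≠ f u

lemma w_succ {s t : Finset V} (hs : s.Nonempty) (h : t.card = s.card + 1) :
    w s + w t = 0 := by
  have h1 : 1 ≤ s.card := card_pos.2 hs
  simp only [w, h]
  have h2 : s.card + 1 - 1 = (s.card - 1) + 1 := by omega
  rw [h2, pow_succ]
  ring

lemma mem_ball_iff {G : Finset (Finset V)} (hG : IsComplex G) {x : Finset V} (hx : x ∈ G)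
    {z : Finset V} : z ∈ ball G x ↔ z ∈ G ∧ x ∪ z ∈ G := by
  obtain ⟨a, ha⟩ := (hG x hx).1
  simp only [ball, mem_filter]
  constructor
  · rintro ⟨hz, y, hy, hxy, hzy⟩
    exact ⟨hz, (hG y hy).2 _ (union_subset hxy hzy) ⟨a, mem_union_left _ ha⟩⟩
  · rintro ⟨hz, hu⟩
    exact ⟨hz, x ∪ z, hu, subset_union_left, subset_union_right⟩

lemma chi_ball {G : Finset (Finset V)} (hG : IsComplex G) {x : Finset V} (hx : x ∈ G) :
    chi (ball G x) = 1 := by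
  obtain ⟨a, ha⟩ := (hG x hx).1
  have hGa : ({a} : Finset V) ∈ G :=
    (hG x hx).2 {a} (singleton_subset_iff.2 ha) (singleton_nonempty a)
  have haB : ({a} : Finset V) ∈ ball G x := by
    refine (mem_ball_iff hG hx).2 ⟨hGa, ?_⟩
    rwa [union_comm, union_eq_right.2 (singleton_subset_iff.2 ha)]
  rw [chi, ← Finset.add_sum_erase _ w haB]
  set s := (ball G x).erase {a} with hs
  set g : Finset V → Finset V := fun z => if a ∈ z then z.erase a else insert a z with hgdef
  have key : ∀ z ∈ s, z ∈ G ∧ x ∪ z ∈ G ∧ z ≠ ({a} : Finset V) := by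
    intro z hz
    have hzB := Finset.mem_of_mem_erase hz
    obtain ⟨h1, h2⟩ := (mem_ball_iff hG hx).1 hzB
    exact ⟨h1, h2, Finset.ne_of_mem_erase hz⟩
  have herase_ne : ∀ z ∈ s, a ∈ z → (z.erase a).Nonempty := by
    intro z hz hac
    obtain ⟨hzG, _, hzne⟩ := key z hz
    have : ¬ ∀ b ∈ z, b = a := fun h =>
      hzne (Finset.eq_singleton_iff_unique_mem.2 ⟨hac, h⟩)
    push_neg at this
    obtain ⟨b, hb, hba⟩ := this
    exact ⟨b, Finset.mem_erase.2 ⟨hba, hb⟩⟩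
  have h1 : ∀ z ∈ s, w z + w (g z) = 0 := by
    intro z hz
    obtain ⟨hzG, hu, hzne⟩ := key z hz
    by_cases hac : a ∈ z
    · have hge : g z = z.erase a := by simp [hgdef, hac]
      rw [hge, add_comm]
      refine w_succ (herase_ne z hz hac) ?_
      rw [Finset.card_erase_of_mem hac]
      have : 1 ≤ z.card := card_pos.2 (hG z hzG).1
      omega
    · have hge : g z = insert a z := by simp [hgdef, hac]
      rw [hge]
      exact w_succ (hG z hzG).1 (Finset.card_insert_of_notMem hac)
  have h3 : ∀ z ∈ s, g z ≠ z := by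
    intro z hz
    by_cases hac : a ∈ z
    · simp only [hgdef, hac, if_true]
      intro h
      exact absurd hac (h ▸ Finset.notMem_erase a z)
    · simp only [hgdef, hac, if_false]
      intro h
      exact hac (h ▸ Finset.mem_insert_self a z)
  have hmem : ∀ z ∈ s, g z ∈ s := by
    intro z hz
    obtain ⟨hzG, hu, hzne⟩ := key z hz
    have huzsub : ∀ t : Finset V, t ⊆ x ∪ z → t.Nonempty → t ∈ G :=
      fun t ht1 ht2 => (hG _ hu).2 t ht1 ht2
    by_cases hac : a ∈ z
    · have hge : g z = z.erase a := by simp [hgdef, hac]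
      rw [hge]
      have hne := herase_ne z hz hac
      refine Finset.mem_erase.2 ⟨?_, (mem_ball_iff hG hx).2 ⟨?_, ?_⟩⟩
      · intro h
        exact (Finset.notMem_erase a z) (h ▸ Finset.mem_singleton_self a)
      · exact (hG z hzG).2 _ (Finset.erase_subset a z) hne
      · refine huzsub _ ?_ ⟨a, Finset.mem_union_left _ ha⟩
        exact Finset.union_subset Finset.subset_union_left
          ((Finset.erase_subset a z).trans Finset.subset_union_right)
    · have hge : g z = insert a z := by simp [hgdef, hac]
      rw [hge]
      have hsub : insert a z ⊆ x ∪ z :=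
        Finset.insert_subset (Finset.mem_union_left _ ha) Finset.subset_union_right
      refine Finset.mem_erase.2 ⟨?_, (mem_ball_iff hG hx).2 ⟨?_, ?_⟩⟩
      · intro h
        obtain ⟨b, hb⟩ := (hG z hzG).1
        have hb' : b ∈ ({a} : Finset V) := h ▸ Finset.mem_insert_of_mem hb
        rw [Finset.mem_singleton] at hb'
        exact hac (hb' ▸ hb)
      · exact huzsub _ hsub ⟨a, Finset.mem_insert_self a z⟩
      · refine huzsub _ ?_ ⟨a, Finset.mem_union_left _ ha⟩
        exact Finset.union_subset Finset.subset_union_left hsub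
  have h4 : ∀ z ∈ s, g (g z) = z := by
    intro z hz
    by_cases hac : a ∈ z
    · have hge : g z = z.erase a := by simp [hgdef, hac]
      rw [hge]
      have : a ∉ z.erase a := Finset.notMem_erase a z
      simp [hgdef, this, Finset.insert_erase hac]
    · have hge : g z = insert a z := by simp [hgdef, hac]
      rw [hge]
      simp [hgdef, Finset.mem_insert_self a z, Finset.erase_insert hac]
  have h0 : ∑ z ∈ s, w z = 0 :=
    Finset.sum_involution (fun z _ => g z) (fun z hz => h1 z hz)
      (fun z hz _ => h3 z hz) (fun z hz => hmem z hz) (fun z hz => h4 z hz)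
  rw [h0, add_zero, w]
  simp

lemma sum_w_subsets {G : Finset (Finset V)} (hG : IsComplex G) {y : Finset V} (hy : y ∈ G) :
    ∑ x ∈ G.filter (· ⊆ y), w x = 1 := by
  have hset : G.filter (· ⊆ y) = y.powerset.filter (·.Nonempty) := by
    ext x
    simp only [mem_filter, mem_powerset]
    constructor
    · rintro ⟨hxG, hxy⟩; exact ⟨hxy, (hG x hxG).1⟩
    · rintro ⟨hxy, hxne⟩; exact ⟨(hG y hy).2 x hxy hxne, hxy⟩
  rw [hset]
  have h0 : ∑ m ∈ y.powerset, (-1 : ℤ) ^ m.card = 0 :=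
    Finset.sum_powerset_neg_one_pow_card_of_nonempty (hG y hy).1
  have hsplit := Finset.sum_filter_add_sum_filter_not y.powerset (·.Nonempty)
    (fun m => (-1 : ℤ) ^ m.card)
  have hnot : y.powerset.filter (fun m => ¬ m.Nonempty) = {∅} := by
    ext m
    simp only [Finset.mem_filter, Finset.mem_powerset, Finset.not_nonempty_iff_eq_empty,
      Finset.mem_singleton]
    constructor
    · rintro ⟨_, h⟩; exact h
    · rintro rfl; exact ⟨Finset.empty_subset y, rfl⟩
  rw [hnot, h0] at hsplit
  simp only [Finset.sum_singleton, Finset.card_empty, pow_zero] at hsplit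
  have hneg : ∑ x ∈ y.powerset.filter (·.Nonempty), (-1 : ℤ) ^ x.card = -1 := by linarith
  have hcongr : ∀ x ∈ y.powerset.filter (·.Nonempty), w x = -((-1 : ℤ) ^ x.card) := by
    intro x hx
    have hxne : x.Nonempty := (Finset.mem_filter.1 hx).2
    have h1 : 1 ≤ x.card := Finset.card_pos.2 hxne
    have hc : x.card = (x.card - 1) + 1 := by omega
    rw [w]
    conv_rhs => rw [hc, pow_succ]
    ring
  rw [Finset.sum_congr rfl hcongr, Finset.sum_neg_distrib, hneg]
  ring

/-- Sphere formula: `Σ_{x ∈ G} w(x) · χ(S(x)) = 0`, i.e. the unit-sphere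
Euler characteristics summed over even-dimensional simplices equal the ones summed over
odd-dimensional simplices. -/
theorem sphere_formula {V : Type} [DecidableEq V] (G : Finset (Finset V))
    (hG : IsComplex G) :
    ∑ x ∈ G, w x * chi (sphere G x) = 0 := by
  have hsub : ∀ x : Finset V, star G x ⊆ ball G x := by
    intro x y hy
    rw [star, mem_filter] at hy
    exact mem_filter.2 ⟨hy.1, y, hy.1, hy.2, Finset.Subset.rfl⟩
  have hchi : ∀ x ∈ G, chi (sphere G x) = 1 - chi (star G x) := by
    intro x hx
    have hs := Finset.sum_sdiff (hsub x) (f := w)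
    have hb := chi_ball hG hx
    simp only [chi, sphere] at *
    omega
  have hstar : ∑ x ∈ G, w x * chi (star G x) = chi G := by
    have h1 : ∀ x ∈ G, w x * chi (star G x) = ∑ y ∈ G, if x ⊆ y then w x * w y else 0 := by
      intro x hx
      simp [chi, star, Finset.mul_sum, Finset.sum_filter]
    rw [Finset.sum_congr rfl h1, Finset.sum_comm]
    have h2 : ∀ y ∈ G, (∑ x ∈ G, if x ⊆ y then w x * w y else 0) = w y := by
      intro y hy
      rw [← Finset.sum_filter]
      have h3 : ∑ x ∈ G.filter (fun x => x ⊆ y), w x * w y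
          = (∑ x ∈ G.filter (· ⊆ y), w x) * w y := by rw [Finset.sum_mul]
      rw [h3, sum_w_subsets hG hy, one_mul]
    rw [Finset.sum_congr rfl h2, chi]
  calc ∑ x ∈ G, w x * chi (sphere G x)
      = ∑ x ∈ G, (w x - w x * chi (star G x)) := by
        refine Finset.sum_congr rfl fun x hx => ?_
        rw [hchi x hx]; ring
    _ = chi G - ∑ x ∈ G, w x * chi (star G x) := by
        rw [Finset.sum_sub_distrib, chi]
    _ = 0 := by rw [hstar, sub_self]


end SphereFormula
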